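/- Consider two agents with nonempty closed convex sets Z_1, Z_2 ⊆ ℝ^n with Z_1 ∩ Z_2 ≠ ∅, and weights a ∈ (0,1). The two-agent constrained consensus iteration v_i(k+1) = (1−a) z_i(k) + a z_j(k) (j ≠ i), z_i(k+1) = P_{Z_i}[v_i(k+1)] keeps each z_i(k) in Z_i for all k ≥ 1, and the quantity ‖z_1(k) − z̃‖² + ‖z_2(k) − z̃‖² is nonincreasing in k for every z̃ ∈ Z_1 ∩ Z_2. -/

import Mathlib

/-!
Each update is a projection of a convex combination of the two current iterates. For `z̃` in the
constraint set, the nearest-point map onto a convex set does not increase the distance to `z̃`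
(the angle at the projection is obtuse), and the squared distance to `z̃` is convex. So
`‖z₁(k+1) - z̃‖² ≤ (1-a)‖z₁ k - z̃‖² + a‖z₂ k - z̃‖²`, symmetrically for `z₂`, and summing the two
bounds gives exactly `‖z₁ k - z̃‖² + ‖z₂ k - z̃‖²`.
-/

open Set InnerProductSpace

section NearestPoint

variable {E : Type*} [NormedAddCommGroup E] [InnerProductSpace ℝ E] {K : Set E} {x p : E}

theorem real_inner_sub_le_zero_of_forall_norm_sub_le (hK : Convex ℝ K) (hp : p ∈ K)
    (hmin : ∀ w ∈ K, ‖x - p‖ ≤ ‖x - w‖) : ∀ w ∈ K, ⟪x - p, w - p⟫_ℝ ≤ 0 := by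
  have : Nonempty K := ⟨⟨p, hp⟩⟩
  refine (norm_eq_iInf_iff_real_inner_le_zero hK hp).1 (le_antisymm ?_ ?_)
  · exact le_ciInf fun w => hmin w w.2
  · exact ciInf_le ⟨0, forall_mem_range.2 fun _ => norm_nonneg _⟩ (⟨p, hp⟩ : K)

theorem norm_sub_le_of_forall_norm_sub_le (hK : Convex ℝ K) (hp : p ∈ K)
    (hmin : ∀ w ∈ K, ‖x - p‖ ≤ ‖x - w‖) {z : E} (hz : z ∈ K) : ‖p - z‖ ≤ ‖x - z‖ := by
  have hobtuse := real_inner_sub_le_zero_of_forall_norm_sub_le hK hp hmin z hz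
  have hexpand : ‖x - z‖ ^ 2 = ‖x - p‖ ^ 2 - 2 * ⟪x - p, z - p⟫_ℝ + ‖p - z‖ ^ 2 := by
    rw [show x - z = (x - p) - (z - p) by abel, norm_sub_sq_real, norm_sub_rev z p]
  refine le_of_pow_le_pow_left₀ two_ne_zero (norm_nonneg _) ?_
  nlinarith [sq_nonneg ‖x - p‖]

end NearestPoint

theorem norm_sub_smul_add_smul_sq_le {E : Type*} [SeminormedAddCommGroup E] [NormedSpace ℝ E]
    {a : ℝ} (ha₀ : 0 ≤ a) (ha₁ : a ≤ 1) (u v z : E) :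
    ‖(1 - a) • u + a • v - z‖ ^ 2 ≤ (1 - a) * ‖u - z‖ ^ 2 + a * ‖v - z‖ ^ 2 := by
  have h := (convexOn_univ_norm.pow (fun _ _ => norm_nonneg _) 2).2 (mem_univ (u - z))
    (mem_univ (v - z)) (sub_nonneg.2 ha₁) ha₀ (sub_add_cancel 1 a)
  have hcomb : (1 - a) • (u - z) + a • (v - z) = (1 - a) • u + a • v - z := by module
  simpa only [Pi.pow_apply, smul_eq_mul, hcomb] using h

theorem norm_sub_sq_le_of_nearest_smul_add_smul {E : Type*} [NormedAddCommGroup E]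
    [InnerProductSpace ℝ E] {K : Set E} (hK : Convex ℝ K) {P : E → E}
    (hP : ∀ x, P x ∈ K ∧ ∀ w ∈ K, ‖x - P x‖ ≤ ‖x - w‖) {a : ℝ} (ha₀ : 0 ≤ a) (ha₁ : a ≤ 1)
    (u v : E) {z : E} (hz : z ∈ K) :
    ‖P ((1 - a) • u + a • v) - z‖ ^ 2 ≤ (1 - a) * ‖u - z‖ ^ 2 + a * ‖v - z‖ ^ 2 := by
  have hproj := norm_sub_le_of_forall_norm_sub_le (x := (1 - a) • u + a • v) hK (hP _).1 (hP _).2 hz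
  exact (pow_le_pow_left₀ (norm_nonneg _) hproj 2).trans
    (norm_sub_smul_add_smul_sq_le ha₀ ha₁ u v z)

theorem stmt_8_general {n : ℕ} (Z₁ Z₂ : Set (EuclideanSpace ℝ (Fin n)))
    (hconv₁ : Convex ℝ Z₁) (hconv₂ : Convex ℝ Z₂)
    (P₁ P₂ : EuclideanSpace ℝ (Fin n) → EuclideanSpace ℝ (Fin n))
    (hP₁ : ∀ x, P₁ x ∈ Z₁ ∧ ∀ w ∈ Z₁, ‖x - P₁ x‖ ≤ ‖x - w‖)
    (hP₂ : ∀ x, P₂ x ∈ Z₂ ∧ ∀ w ∈ Z₂, ‖x - P₂ x‖ ≤ ‖x - w‖)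
    (a : ℝ) (ha : 0 < a) (ha1 : a < 1)
    (z₁ z₂ : ℕ → EuclideanSpace ℝ (Fin n))
    (hrec₁ : ∀ k, z₁ (k + 1) = P₁ ((1 - a) • z₁ k + a • z₂ k))
    (hrec₂ : ∀ k, z₂ (k + 1) = P₂ ((1 - a) • z₂ k + a • z₁ k)) :
    (∀ k, 1 ≤ k → z₁ k ∈ Z₁ ∧ z₂ k ∈ Z₂) ∧
      ∀ ztilde ∈ Z₁ ∩ Z₂, ∀ k,
        ‖z₁ (k + 1) - ztilde‖ ^ 2 + ‖z₂ (k + 1) - ztilde‖ ^ 2 ≤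
          ‖z₁ k - ztilde‖ ^ 2 + ‖z₂ k - ztilde‖ ^ 2 := by
  refine ⟨fun k hk => ?_, fun z hz k => ?_⟩
  · obtain ⟨k, rfl⟩ := Nat.exists_eq_add_of_le' hk
    exact ⟨hrec₁ k ▸ (hP₁ _).1, hrec₂ k ▸ (hP₂ _).1⟩
  · have step₁ := norm_sub_sq_le_of_nearest_smul_add_smul hconv₁ hP₁ ha.le ha1.le
      (z₁ k) (z₂ k) hz.1
    have step₂ := norm_sub_sq_le_of_nearest_smul_add_smul hconv₂ hP₂ ha.le ha1.le
      (z₂ k) (z₁ k) hz.2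
    rw [hrec₁, hrec₂]
    linarith

/-- Two-agent constrained consensus: iterates stay feasible and the summed
squared distance to any point of `Z₁ ∩ Z₂` is nonincreasing. -/
theorem stmt_8 {n : ℕ} (Z₁ Z₂ : Set (EuclideanSpace ℝ (Fin n)))
    (hne₁ : Z₁.Nonempty) (hne₂ : Z₂.Nonempty)
    (hcl₁ : IsClosed Z₁) (hcl₂ : IsClosed Z₂)
    (hconv₁ : Convex ℝ Z₁) (hconv₂ : Convex ℝ Z₂)
    (hint : (Z₁ ∩ Z₂).Nonempty)
    (P₁ P₂ : EuclideanSpace ℝ (Fin n) → EuclideanSpace ℝ (Fin n))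
    (hP₁ : ∀ x, P₁ x ∈ Z₁ ∧ ∀ w ∈ Z₁, ‖x - P₁ x‖ ≤ ‖x - w‖)
    (hP₂ : ∀ x, P₂ x ∈ Z₂ ∧ ∀ w ∈ Z₂, ‖x - P₂ x‖ ≤ ‖x - w‖)
    (a : ℝ) (ha : 0 < a) (ha1 : a < 1)
    (z₁ z₂ : ℕ → EuclideanSpace ℝ (Fin n))
    (h0₁ : z₁ 0 ∈ Z₁) (h0₂ : z₂ 0 ∈ Z₂)
    (hrec₁ : ∀ k, z₁ (k + 1) = P₁ ((1 - a) • z₁ k + a • z₂ k))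
    (hrec₂ : ∀ k, z₂ (k + 1) = P₂ ((1 - a) • z₂ k + a • z₁ k)) :
    (∀ k, 1 ≤ k → z₁ k ∈ Z₁ ∧ z₂ k ∈ Z₂) ∧
      ∀ ztilde ∈ Z₁ ∩ Z₂, ∀ k,
        ‖z₁ (k + 1) - ztilde‖ ^ 2 + ‖z₂ (k + 1) - ztilde‖ ^ 2 ≤
          ‖z₁ k - ztilde‖ ^ 2 + ‖z₂ k - ztilde‖ ^ 2 :=
  stmt_8_general Z₁ Z₂ hconv₁ hconv₂ P₁ P₂ hP₁ hP₂ a ha ha1 z₁ z₂ hrec₁ hrec₂
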